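/- Let X and Y be real vector spaces and let f : X → Y be an odd function satisfying the functional equation f(2x+y) + f(2x-y) = 4(f(x+y) + f(x-y)) - (3/7)(f(2y) - 2f(y)) + 2f(2x) - 8f(x) for all x, y in X. Then f satisfies the Jensen-type equation f(x+y) + f(x-y) = 2 f(x) for all x, y in X. -/

import Mathlib

/-- The mixed quartic-additive functional equation (1.4):
`f(2x+y) + f(2x-y) = 4(f(x+y) + f(x-y)) - (3/7)(f(2y) - 2f(y)) + 2f(2x) - 8f(x)`. -/
def MixedEq {X Y : Type*} [AddCommGroup X] [Module ℝ X] [AddCommGroup Y] [Module ℝ Y]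
    (f : X → Y) : Prop :=
  ∀ x y : X,
    f ((2 : ℝ) • x + y) + f ((2 : ℝ) • x - y) =
      (4 : ℝ) • (f (x + y) + f (x - y))
        - ((3 : ℝ) / 7) • (f ((2 : ℝ) • y) - (2 : ℝ) • f y)
        + (2 : ℝ) • f ((2 : ℝ) • x) - (8 : ℝ) • f x

/-- The quartic functional equation (1.3):
`f(2x+y) + f(2x-y) = 4(f(x+y) + f(x-y)) + 24 f(x) - 6 f(y)`. -/
def IsQuartic {X Y : Type*} [AddCommGroup X] [Module ℝ X] [AddCommGroup Y] [Module ℝ Y]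
    (f : X → Y) : Prop :=
  ∀ x y : X,
    f ((2 : ℝ) • x + y) + f ((2 : ℝ) • x - y) =
      (4 : ℝ) • (f (x + y) + f (x - y)) + (24 : ℝ) • f x - (6 : ℝ) • f y

/-!
Putting `x = 0` shows that an odd solution satisfies `f (2y) = 2 f y`, which reduces the
equation to `f(2x+y) + f(2x-y) = 4 f(x+y) + 4 f(x-y) - 4 f x`. Replacing `y` by `2y`, and then
exchanging the roles of `x` and `y` by oddness, gives the difference `f(2x+y) - f(2x-y)` as well,
hence a closed formula for `f(2x+y)` in terms of `f(x±y)`, `f x` and `f y`. Evaluating `f(3x+y)`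
with this formula in the two ways `2x + (x+y)` and `2(x+y) + (x-y)` yields
`11 f(x+y) + 5 f(x-y) = 16 f x + 6 f y`, and adding this to its instance at `-y` gives the
Jensen equation.
-/

namespace MixedEq

variable {X Y : Type*} [AddCommGroup X] [Module ℝ X] [AddCommGroup Y] [Module ℝ Y] {f : X → Y}

theorem map_two_smul (hodd : f.Odd) (hf : MixedEq f) (y : X) :
    f ((2 : ℝ) • y) = (2 : ℝ) • f y := by
  have : IsAddTorsionFree Y := .of_isTorsionFree ℝ Y
  have h := hf 0 y
  rw [smul_zero, zero_add, zero_sub, hodd y, hodd.map_zero] at h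
  have h' : ((3 : ℝ) / 7) • (f ((2 : ℝ) • y) - (2 : ℝ) • f y) = 0 := by
    linear_combination (norm := module) h
  exact sub_eq_zero.mp ((smul_eq_zero.mp h').resolve_left (by norm_num))

theorem add_two_smul_left (hodd : f.Odd) (hf : MixedEq f) (x y : X) :
    f ((2 : ℝ) • x + y) + f ((2 : ℝ) • x - y) =
      (4 : ℝ) • f (x + y) + (4 : ℝ) • f (x - y) - (4 : ℝ) • f x := by
  have h := hf x y
  rw [map_two_smul hodd hf y, map_two_smul hodd hf x] at h
  linear_combination (norm := module) h

theorem add_two_smul_right (hodd : f.Odd) (hf : MixedEq f) (x y : X) :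
    f (x + (2 : ℝ) • y) + f (x - (2 : ℝ) • y) =
      ((1 : ℝ) / 2) • f (x + y) + ((1 : ℝ) / 2) • f (x - y) + f x := by
  have h := add_two_smul_left hodd hf x ((2 : ℝ) • y)
  rw [← smul_add, ← smul_sub, map_two_smul hodd hf, map_two_smul hodd hf] at h
  linear_combination (norm := module) (-(1 : ℝ) / 4) • h

theorem sub_two_smul_left (hodd : f.Odd) (hf : MixedEq f) (x y : X) :
    f ((2 : ℝ) • x + y) - f ((2 : ℝ) • x - y) =
      ((1 : ℝ) / 2) • f (x + y) - ((1 : ℝ) / 2) • f (x - y) + f y := by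
  have h := add_two_smul_right hodd hf y x
  rw [add_comm y, ← neg_sub, hodd, add_comm y, ← neg_sub x, hodd] at h
  linear_combination (norm := module) h

theorem two_smul_add (hodd : f.Odd) (hf : MixedEq f) (x y : X) :
    f ((2 : ℝ) • x + y) =
      ((9 : ℝ) / 4) • f (x + y) + ((7 : ℝ) / 4) • f (x - y) - (2 : ℝ) • f x
        + ((1 : ℝ) / 2) • f y := by
  linear_combination (norm := module)
    ((1 : ℝ) / 2) • add_two_smul_left hodd hf x y + ((1 : ℝ) / 2) • sub_two_smul_left hodd hf x y

theorem eleven_smul_add_add_five_smul_sub (hodd : f.Odd) (hf : MixedEq f) (x y : X) :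
    (11 : ℝ) • f (x + y) + (5 : ℝ) • f (x - y) = (16 : ℝ) • f x + (6 : ℝ) • f y := by
  have hx := two_smul_add hodd hf x (x + y)
  rw [show x - (x + y) = -y by abel, hodd,
    show x + (x + y) = (2 : ℝ) • x + y by module, two_smul_add hodd hf x y] at hx
  have hxy := two_smul_add hodd hf (x + y) (x - y)
  rw [show x + y + (x - y) = (2 : ℝ) • x by module,
    show x + y - (x - y) = (2 : ℝ) • y by module, map_two_smul hodd hf, map_two_smul hodd hf,
    show (2 : ℝ) • (x + y) + (x - y) = (2 : ℝ) • x + (x + y) by module] at hxy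
  linear_combination (norm := module) ((16 : ℝ) / 11) • (hxy - hx)

end MixedEq

theorem odd_solution_jensen {X Y : Type*} [AddCommGroup X] [Module ℝ X]
    [AddCommGroup Y] [Module ℝ Y] (f : X → Y)
    (hodd : ∀ x : X, f (-x) = -f x) (hf : MixedEq f) :
    ∀ x y : X, f (x + y) + f (x - y) = (2 : ℝ) • f x := by
  intro x y
  have hy := hf.eleven_smul_add_add_five_smul_sub hodd x y
  have hny := hf.eleven_smul_add_add_five_smul_sub hodd x (-y)
  rw [← sub_eq_add_neg, sub_neg_eq_add, hodd] at hny
  linear_combination (norm := module) ((1 : ℝ) / 16) • (hy + hny)
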